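/- arXiv:2604.17410 — 4 statements merged into one kernel-verified Lean document; each statement's English description precedes it below -/
import Mathlib

section
/- Let p, a, b ∈ [0,1] with a + b − p·a·b ≤ 1, and let (ξ, ξ′) be a pair of {0,1}-valued random variables with joint law ℙ(ξ=ξ′=1) = p·a·b, ℙ(ξ=1, ξ′=0) = a − p·a·b, ℙ(ξ=0, ξ′=1) = b − p·a·b, ℙ(ξ=ξ′=0) = 1 − a − b + p·a·b. If Y is a Bernoulli(p) random variable independent of the pair (ξ, ξ′), then the random variables Y·ξ and Y·ξ′ are independent, with Y·ξ ~ Bernoulli(p·a) and Y·ξ′ ~ Bernoulli(p·b). -/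
/-!
Almost surely `Y ξ` and `Y ξ'` are the indicators of `A = {Y = 1, ξ = 1}` and
`B = {Y = 1, ξ' = 1}`. Since `Y` is independent of `(ξ, ξ')`, `ℙ(A) = p a`, `ℙ(B) = p b` and
`ℙ(A ∩ B) = p · ℙ(ξ = ξ' = 1) = p · p a b = ℙ(A) ℙ(B)`; indicators of independent events are
independent.
-/

open MeasureTheory ProbabilityTheory
open scoped ENNReal

/-- Bernoulli(p) law on ℝ (mass p at 1, mass 1-p at 0). -/
noncomputable def bernoulliReal (p : ℝ) : Measure ℝ :=
  ENNReal.ofReal p • Measure.dirac 1 + ENNReal.ofReal (1 - p) • Measure.dirac 0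

open Set

lemma indicator_preimage_one_apply {α : Type*} {f : α → ℝ} {x : α} (h : f x = 0 ∨ f x = 1) :
    (f ⁻¹' {1}).indicator 1 x = f x := by
  rcases h with h | h <;> simp [h]

section

variable {Ω : Type*} [MeasurableSpace Ω] {μ : Measure Ω}

lemma ae_eq_zero_or_one_of_map_eq_bernoulliReal {Y : Ω → ℝ} {p : ℝ} (hY : Measurable Y)
    (h : μ.map Y = bernoulliReal p) : ∀ᵐ ω ∂μ, Y ω = 0 ∨ Y ω = 1 := by
  refine ae_of_ae_map (p := fun y ↦ y = 0 ∨ y = 1) hY.aemeasurable ?_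
  rw [h, bernoulliReal, ae_add_measure_iff]
  exact ⟨Measure.ae_smul_measure (by simp) _, Measure.ae_smul_measure (by simp) _⟩

lemma measure_preimage_one_of_map_eq_bernoulliReal {Y : Ω → ℝ} {p : ℝ} (hY : Measurable Y)
    (h : μ.map Y = bernoulliReal p) : μ (Y ⁻¹' {1}) = ENNReal.ofReal p := by
  rw [← Measure.map_apply hY (measurableSet_singleton 1), h, bernoulliReal]
  simp

lemma map_indicator_one_eq_bernoulliReal [IsProbabilityMeasure μ] {A : Set Ω}
    (hA : MeasurableSet A) : μ.map (A.indicator 1) = bernoulliReal (μ.real A) := by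
  ext s hs
  classical
  rw [Measure.map_apply (measurable_one.indicator hA) hs, Pi.one_def,
    indicator_const_preimage_eq_union, bernoulliReal, ← probReal_compl_eq_one_sub hA,
    ofReal_measureReal, ofReal_measureReal]
  by_cases h1 : (1 : ℝ) ∈ s <;> by_cases h0 : (0 : ℝ) ∈ s <;>
    simp [h1, h0, measure_add_measure_compl hA]

lemma ProbabilityTheory.IndepSet.indepFun_indicator {β : Type*} [Zero β] [MeasurableSpace β]
    {A B : Set Ω} (h : IndepSet A B μ) (c d : β) :
    IndepFun (A.indicator fun _ ↦ c) (B.indicator fun _ ↦ d) μ :=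
  indep_of_indep_of_le_left
    (indep_of_indep_of_le_right h
      (MeasurableSpace.comap_indicator_const_le_generateFrom_singleton B d))
    (MeasurableSpace.comap_indicator_const_le_generateFrom_singleton A c)

lemma mul_ae_eq_indicator_inter {f g : Ω → ℝ} (hf : ∀ᵐ ω ∂μ, f ω = 0 ∨ f ω = 1)
    (hg : ∀ᵐ ω ∂μ, g ω = 0 ∨ g ω = 1) :
    (fun ω ↦ f ω * g ω) =ᵐ[μ] (f ⁻¹' {1} ∩ g ⁻¹' {1}).indicator 1 := by
  filter_upwards [hf, hg] with ω hfω hgω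
  rw [inter_indicator_one, Pi.mul_apply, indicator_preimage_one_apply hfω,
    indicator_preimage_one_apply hgω]

lemma map_mul_eq_bernoulliReal [IsProbabilityMeasure μ] {f g : Ω → ℝ} (hf : Measurable f)
    (hg : Measurable g) (hf01 : ∀ᵐ ω ∂μ, f ω = 0 ∨ f ω = 1) (hg01 : ∀ᵐ ω ∂μ, g ω = 0 ∨ g ω = 1)
    {q : ℝ} (hq : 0 ≤ q) (h : μ (f ⁻¹' {1} ∩ g ⁻¹' {1}) = ENNReal.ofReal q) :
    μ.map (fun ω ↦ f ω * g ω) = bernoulliReal q := by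
  have hm1 := measurableSet_singleton (1 : ℝ)
  rw [Measure.map_congr (mul_ae_eq_indicator_inter hf01 hg01),
    map_indicator_one_eq_bernoulliReal ((hf hm1).inter (hg hm1)), measureReal_def, h,
    ENNReal.toReal_ofReal hq]

lemma measure_eq_ofReal_of_forall_eq_zero_or_one (s : Set Ω) {g : Ω → ℝ}
    (hg : Measurable g) (h : ∀ ω, g ω = 0 ∨ g ω = 1) {a c : ℝ} (hc : 0 ≤ c) (hca : c ≤ a)
    (h1 : μ (s ∩ g ⁻¹' {1}) = ENNReal.ofReal c) (h0 : μ (s ∩ g ⁻¹' {0}) = ENNReal.ofReal (a - c)) :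
    μ s = ENNReal.ofReal a := by
  rw [← add_sub_cancel c a, ENNReal.ofReal_add hc (sub_nonneg.2 hca), ← h1, ← h0,
    ← measure_inter_add_sdiff s (hg (measurableSet_singleton 1))]
  congr 2
  ext ω
  rcases h ω with h | h <;> simp [h]

lemma ProbabilityTheory.IndepFun.indepSet_inter_preimage [IsZeroOrProbabilityMeasure μ]
    {β γ γ' : Type*} [MeasurableSpace β] [MeasurableSpace γ] [MeasurableSpace γ']
    {Y : Ω → β} {X : Ω → γ} {X' : Ω → γ'} (hY : Measurable Y) (hX : Measurable X)
    (hX' : Measurable X') (hindep : IndepFun Y (fun ω ↦ (X ω, X' ω)) μ)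
    {s : Set β} {t : Set γ} {t' : Set γ'}
    (hs : MeasurableSet s) (ht : MeasurableSet t) (ht' : MeasurableSet t')
    (hcorr : μ (Y ⁻¹' s) * μ (X ⁻¹' t ∩ X' ⁻¹' t') =
      μ (Y ⁻¹' s) * μ (Y ⁻¹' s) * μ (X ⁻¹' t) * μ (X' ⁻¹' t')) :
    IndepSet (Y ⁻¹' s ∩ X ⁻¹' t) (Y ⁻¹' s ∩ X' ⁻¹' t') μ := by
  have hYX : IndepFun Y X μ := hindep.comp measurable_id measurable_fst
  have hYX' : IndepFun Y X' μ := hindep.comp measurable_id measurable_snd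
  rw [indepSet_iff_measure_inter_eq_mul ((hY hs).inter (hX ht)) ((hY hs).inter (hX' ht')) μ,
    ← inter_inter_distrib_left, ← mk_preimage_prod,
    hindep.measure_inter_preimage_eq_mul _ _ hs (ht.prod ht'), mk_preimage_prod, hcorr,
    hYX.measure_inter_preimage_eq_mul _ _ hs ht, hYX'.measure_inter_preimage_eq_mul _ _ hs ht']
  ring

end

theorem statement0_general {Ω : Type*} [MeasurableSpace Ω] (μ : Measure Ω) [IsProbabilityMeasure μ]
    (p a b : ℝ) (hp : p ∈ Set.Icc (0:ℝ) 1) (ha : a ∈ Set.Icc (0:ℝ) 1)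
    (hb : b ∈ Set.Icc (0:ℝ) 1)
    (ξ ξ' Y : Ω → ℝ)
    (hmξ : Measurable ξ) (hmξ' : Measurable ξ') (hmY : Measurable Y)
    (hξ01 : ∀ ω, ξ ω = 0 ∨ ξ ω = 1) (hξ'01 : ∀ ω, ξ' ω = 0 ∨ ξ' ω = 1)
    (h11 : μ {ω | ξ ω = 1 ∧ ξ' ω = 1} = ENNReal.ofReal (p * a * b))
    (h10 : μ {ω | ξ ω = 1 ∧ ξ' ω = 0} = ENNReal.ofReal (a - p * a * b))
    (h01 : μ {ω | ξ ω = 0 ∧ ξ' ω = 1} = ENNReal.ofReal (b - p * a * b))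
    (hY : μ.map Y = bernoulliReal p)
    (hindep : IndepFun Y (fun ω => (ξ ω, ξ' ω)) μ) :
    IndepFun (fun ω => Y ω * ξ ω) (fun ω => Y ω * ξ' ω) μ ∧
    μ.map (fun ω => Y ω * ξ ω) = bernoulliReal (p * a) ∧
    μ.map (fun ω => Y ω * ξ' ω) = bernoulliReal (p * b) := by
  obtain ⟨hp0, hp1⟩ := hp
  obtain ⟨ha0, ha1⟩ := ha
  obtain ⟨hb0, hb1⟩ := hb
  have hm1 := measurableSet_singleton (1 : ℝ)
  have hcell : ∀ x y : ℝ, {ω | ξ ω = x ∧ ξ' ω = y} = ξ ⁻¹' {x} ∩ ξ' ⁻¹' {y} := fun _ _ ↦ rfl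
  rw [hcell] at h11 h10 h01
  have hpab : 0 ≤ p * a * b := by positivity
  have hμξ : μ (ξ ⁻¹' {1}) = ENNReal.ofReal a :=
    measure_eq_ofReal_of_forall_eq_zero_or_one _ hmξ' hξ'01 hpab
      (by nlinarith [mul_le_one₀ hp1 hb0 hb1]) h11 h10
  have hμξ' : μ (ξ' ⁻¹' {1}) = ENNReal.ofReal b :=
    measure_eq_ofReal_of_forall_eq_zero_or_one _ hmξ hξ01 hpab
      (by nlinarith [mul_le_one₀ hp1 ha0 ha1]) (by rwa [inter_comm]) (by rwa [inter_comm])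
  have hμY := measure_preimage_one_of_map_eq_bernoulliReal hmY hY
  have hYξ : IndepFun Y ξ μ := hindep.comp measurable_id measurable_fst
  have hYξ' : IndepFun Y ξ' μ := hindep.comp measurable_id measurable_snd
  have hμA : μ (Y ⁻¹' {1} ∩ ξ ⁻¹' {1}) = ENNReal.ofReal (p * a) := by
    rw [hYξ.measure_inter_preimage_eq_mul _ _ hm1 hm1, hμY, hμξ, ENNReal.ofReal_mul hp0]
  have hμB : μ (Y ⁻¹' {1} ∩ ξ' ⁻¹' {1}) = ENNReal.ofReal (p * b) := by
    rw [hYξ'.measure_inter_preimage_eq_mul _ _ hm1 hm1, hμY, hμξ', ENNReal.ofReal_mul hp0]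
  have hAB := hindep.indepSet_inter_preimage hmY hmξ hmξ' hm1 hm1 hm1 (by
    rw [hμY, h11, hμξ, hμξ', ← ENNReal.ofReal_mul hp0, ← ENNReal.ofReal_mul (by positivity),
      ← ENNReal.ofReal_mul (by positivity), ← ENNReal.ofReal_mul (by positivity)]
    ring_nf)
  have hYae := ae_eq_zero_or_one_of_map_eq_bernoulliReal hmY hY
  have hξae := ae_of_all μ hξ01
  have hξ'ae := ae_of_all μ hξ'01
  exact ⟨(hAB.indepFun_indicator 1 1).congr (mul_ae_eq_indicator_inter hYae hξae).symm
      (mul_ae_eq_indicator_inter hYae hξ'ae).symm,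
    map_mul_eq_bernoulliReal hmY hmξ hYae hξae (by positivity) hμA,
    map_mul_eq_bernoulliReal hmY hmξ' hYae hξ'ae (by positivity) hμB⟩

/-- splitting a Bernoulli(p) variable.  If `(ξ, ξ′)` has the given joint law
and `Y ~ Bernoulli(p)` is independent of `(ξ, ξ′)`, then `Y ξ` and `Y ξ′` are independent
with laws `Bernoulli(p a)` and `Bernoulli(p b)`. -/
theorem statement0 {Ω : Type*} [MeasurableSpace Ω] (μ : Measure Ω) [IsProbabilityMeasure μ]
    (p a b : ℝ) (hp : p ∈ Set.Icc (0:ℝ) 1) (ha : a ∈ Set.Icc (0:ℝ) 1)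
    (hb : b ∈ Set.Icc (0:ℝ) 1) (hab : a + b - p * a * b ≤ 1)
    (ξ ξ' Y : Ω → ℝ)
    (hmξ : Measurable ξ) (hmξ' : Measurable ξ') (hmY : Measurable Y)
    (hξ01 : ∀ ω, ξ ω = 0 ∨ ξ ω = 1) (hξ'01 : ∀ ω, ξ' ω = 0 ∨ ξ' ω = 1)
    (h11 : μ {ω | ξ ω = 1 ∧ ξ' ω = 1} = ENNReal.ofReal (p * a * b))
    (h10 : μ {ω | ξ ω = 1 ∧ ξ' ω = 0} = ENNReal.ofReal (a - p * a * b))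
    (h01 : μ {ω | ξ ω = 0 ∧ ξ' ω = 1} = ENNReal.ofReal (b - p * a * b))
    (h00 : μ {ω | ξ ω = 0 ∧ ξ' ω = 0} = ENNReal.ofReal (1 - a - b + p * a * b))
    (hY : μ.map Y = bernoulliReal p)
    (hindep : IndepFun Y (fun ω => (ξ ω, ξ' ω)) μ) :
    IndepFun (fun ω => Y ω * ξ ω) (fun ω => Y ω * ξ' ω) μ ∧
    μ.map (fun ω => Y ω * ξ ω) = bernoulliReal (p * a) ∧
    μ.map (fun ω => Y ω * ξ' ω) = bernoulliReal (p * b) :=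
  statement0_general μ p a b hp ha hb ξ ξ' Y hmξ hmξ' hmY hξ01 hξ'01 h11 h10 h01 hY hindep
end

section
/- Let q ≥ 1 and l ≥ 1 be integers, let a, b ∈ ℝ, and fix s₀, s_l ∈ [q]. Let σ₁, …, σ_{l−1} be i.i.d. uniform random elements of [q], and set σ₀ := s₀ and σ_l := s_l. Then E[∏_{i=1}^{l} (a + b·ω(σ_{i−1}, σ_i))] = a^l + b^l·ω(s₀, s_l). -/
/-- `ω(s,t) = q·1{s=t} − 1`. -/
def omegaFn (q : ℕ) (s t : Fin q) : ℝ := (q : ℝ) * (if s = t then 1 else 0) - 1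

/-- The chain `σ₀ = s₀, σ₁, …, σ_{l-1}, σ_l = s_l` determined by the internal values
`τ : Fin (l-1) → Fin q` (junk value `s₀` outside the relevant range). -/
def chainFn (q l : ℕ) (s0 sl : Fin q) (τ : Fin (l - 1) → Fin q) (i : ℕ) : Fin q :=
  if i = 0 then s0
  else if i = l then sl
  else if h : i - 1 < l - 1 then τ ⟨i - 1, h⟩ else s0

lemma sum_omega_right (q : ℕ) (s : Fin q) : ∑ t : Fin q, omegaFn q s t = 0 := by
  simp [omegaFn, Finset.sum_sub_distrib, ← Finset.mul_sum]

lemma sum_omega_left (q : ℕ) (u : Fin q) : ∑ t : Fin q, omegaFn q t u = 0 := by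
  simp [omegaFn, Finset.sum_sub_distrib, ← Finset.mul_sum]

lemma sum_omega_mul (q : ℕ) (s u : Fin q) :
    ∑ t : Fin q, omegaFn q s t * omegaFn q t u = q * omegaFn q s u := by
  have h : ∀ t : Fin q, omegaFn q s t * omegaFn q t u =
      (q:ℝ)^2 * ((if s = t then (1:ℝ) else 0) * (if t = u then 1 else 0))
      - q * (if s = t then 1 else 0) - q * (if t = u then 1 else 0) + 1 := by
    intro t; simp only [omegaFn]; ring
  simp_rw [h]
  simp [Finset.sum_add_distrib, Finset.sum_sub_distrib, ← Finset.mul_sum, ite_and,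
    omegaFn, mul_ite, mul_one, mul_zero, Finset.sum_ite_eq, Finset.sum_ite_eq']
  split <;> ring

lemma chain_snoc (q m : ℕ) (s0 sl t : Fin q) (τ : Fin m → Fin q) (j : ℕ) (hj : j ≤ m + 1) :
    chainFn q (m + 2) s0 sl (Fin.snoc τ t) j = chainFn q (m + 1) s0 t τ j := by
  unfold chainFn
  rcases Nat.eq_or_lt_of_le hj with h | h
  · subst h
    have h1 : m + 1 ≠ 0 := by omega
    have h2 : m + 1 ≠ m + 2 := by omega
    rw [if_neg h1, if_neg h2, if_neg h1, if_pos rfl]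
    have h3 : m + 1 - 1 < m + 2 - 1 := by omega
    rw [dif_pos h3]
    have : (⟨m + 1 - 1, h3⟩ : Fin (m + 2 - 1)) = Fin.last m := by
      apply Fin.ext; simp
    rw [this, Fin.snoc_last]
  · rcases Nat.eq_zero_or_pos j with h0 | h0
    · simp [h0]
    · have h1 : j ≠ 0 := by omega
      have h2 : j ≠ m + 2 := by omega
      have h3 : j ≠ m + 1 := by omega
      rw [if_neg h1, if_neg h2, if_neg h1, if_neg h3]
      have h4 : j - 1 < m + 2 - 1 := by omega
      have h5 : j - 1 < m + 1 - 1 := by omega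
      rw [dif_pos h4, dif_pos h5]
      have h6 : j - 1 < m := by omega
      have : (⟨j - 1, h4⟩ : Fin (m + 2 - 1)) = Fin.castSucc ⟨j - 1, h6⟩ := by
        apply Fin.ext; simp
      rw [this, Fin.snoc_castSucc]

lemma aux_sum (q : ℕ) (a b : ℝ) : ∀ (m : ℕ) (s0 sl : Fin q),
    ∑ τ : Fin (m + 1 - 1) → Fin q,
      ∏ i ∈ Finset.Icc 1 (m + 1),
        (a + b * omegaFn q (chainFn q (m + 1) s0 sl τ (i - 1)) (chainFn q (m + 1) s0 sl τ i))
    = (q : ℝ) ^ m * (a ^ (m + 1) + b ^ (m + 1) * omegaFn q s0 sl) := by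
  intro m
  induction m with
  | zero =>
    intro s0 sl
    simp [chainFn, Finset.Icc_self, omegaFn]
  | succ m ih =>
    intro s0 sl
    show ∑ τ : Fin (m + 1) → Fin q,
        ∏ i ∈ Finset.Icc 1 (m + 2),
          (a + b * omegaFn q (chainFn q (m + 2) s0 sl τ (i - 1)) (chainFn q (m + 2) s0 sl τ i))
      = (q : ℝ) ^ (m + 1) * (a ^ (m + 2) + b ^ (m + 2) * omegaFn q s0 sl)
    rw [← Equiv.sum_comp (Fin.snocEquiv (fun _ : Fin (m + 1) => Fin q))]
    rw [Fintype.sum_prod_type]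
    have key : ∀ (t : Fin q) (τ : Fin m → Fin q),
        ∏ i ∈ Finset.Icc 1 (m + 2),
          (a + b * omegaFn q (chainFn q (m + 2) s0 sl (Fin.snoc τ t) (i - 1))
            (chainFn q (m + 2) s0 sl (Fin.snoc τ t) i))
        = (∏ i ∈ Finset.Icc 1 (m + 1),
            (a + b * omegaFn q (chainFn q (m + 1) s0 t τ (i - 1)) (chainFn q (m + 1) s0 t τ i)))
          * (a + b * omegaFn q t sl) := by
      intro t τ
      rw [Finset.prod_Icc_succ_top (a := 1) (b := m + 1) (by omega)]
      congr 1
      · apply Finset.prod_congr rfl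
        intro i hi
        simp only [Finset.mem_Icc] at hi
        rw [chain_snoc q m s0 sl t τ (i - 1) (by omega), chain_snoc q m s0 sl t τ i (by omega)]
      · rw [chain_snoc q m s0 sl t τ (m + 2 - 1) (by omega)]
        have h1 : chainFn q (m + 1) s0 t τ (m + 2 - 1) = t := by simp [chainFn]
        have h2 : chainFn q (m + 2) s0 sl (Fin.snoc τ t) (m + 1 + 1) = sl := by simp [chainFn]
        rw [h1, h2]
    have he : ∀ (t : Fin q) (τ : Fin m → Fin q),
        (Fin.snocEquiv fun _ : Fin (m + 1) => Fin q) (t, τ) = Fin.snoc τ t := fun _ _ => rfl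
    simp_rw [he, key]
    have step : ∀ t : Fin q, ∑ τ : Fin m → Fin q,
        (∏ i ∈ Finset.Icc 1 (m + 1),
          (a + b * omegaFn q (chainFn q (m + 1) s0 t τ (i - 1)) (chainFn q (m + 1) s0 t τ i)))
        * (a + b * omegaFn q t sl)
        = ((q : ℝ) ^ m * (a ^ (m + 1) + b ^ (m + 1) * omegaFn q s0 t)) * (a + b * omegaFn q t sl) := by
      intro t
      rw [← Finset.sum_mul]
      exact congrArg (fun z => z * (a + b * omegaFn q t sl)) (ih s0 t)
    simp_rw [step]
    have expand : ∀ t : Fin q,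
        ((q : ℝ) ^ m * (a ^ (m + 1) + b ^ (m + 1) * omegaFn q s0 t)) * (a + b * omegaFn q t sl)
        = (q : ℝ) ^ m * (a ^ (m + 2) + (a ^ (m + 1) * b) * omegaFn q t sl
            + (b ^ (m + 1) * a) * omegaFn q s0 t
            + (b ^ (m + 1) * b) * (omegaFn q s0 t * omegaFn q t sl)) := by
      intro t; ring
    simp_rw [expand, ← Finset.mul_sum, Finset.sum_add_distrib, ← Finset.mul_sum,
      sum_omega_left, sum_omega_right, sum_omega_mul, Finset.sum_const, Finset.card_univ,
      Fintype.card_fin]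
    ring

/-- expectation over a chain: with `σ₁,…,σ_{l-1}` i.i.d. uniform on `[q]`,
`σ₀ = s₀` and `σ_l = s_l`,
`E[∏_{i=1}^{l} (a + b ω(σ_{i-1}, σ_i))] = a^l + b^l ω(s₀, s_l)`. -/
theorem statement2 (q l : ℕ) (hq : 1 ≤ q) (hl : 1 ≤ l) (a b : ℝ) (s0 sl : Fin q) :
    (1 / (q : ℝ) ^ (l - 1)) *
      ∑ τ : Fin (l - 1) → Fin q,
        ∏ i ∈ Finset.Icc 1 l,
          (a + b * omegaFn q (chainFn q l s0 sl τ (i - 1)) (chainFn q l s0 sl τ i))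
      = a ^ l + b ^ l * omegaFn q s0 sl := by
  obtain ⟨m, rfl⟩ : ∃ m, l = m + 1 := ⟨l - 1, by omega⟩
  rw [aux_sum q a b m s0 sl]
  have hq0 : (q : ℝ) ≠ 0 := by positivity
  rw [show m + 1 - 1 = m from rfl]
  field_simp
end

section
/- Let n ≥ 1, ρ ∈ [0,1], 0 < p₀ < 1, p₁ ∈ [0,1], set λ := (p₁ − p₀)/√(p₀(1−p₀)), and let S be a simple graph with vertex set V(S) ⊆ [n], edge set E(S), and no isolated vertices. Then, for Y distributed according to the planted dense subgraph measure P_{p₀, p₁, ρ, n}: E[∏_{(i,j) ∈ E(S)} (Y_{ij} − p₀)/√(p₀(1−p₀))] = λ^{|E(S)|} · ρ^{|V(S)|}. -/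
open MeasureTheory ProbabilityTheory Filter
open scoped ENNReal NNReal

/-- The degree-`D` advantage between two measures on a finite-dimensional
real coordinate space. -/
noncomputable def Adv {ι : Type} [Fintype ι] (P Q : Measure (ι → ℝ)) (D : ℕ) : ℝ :=
  sSup {r : ℝ | ∃ f : MvPolynomial ι ℝ, f.totalDegree ≤ D ∧
    0 < ∫ x, (MvPolynomial.eval x f) ^ 2 ∂Q ∧
    r = (∫ x, MvPolynomial.eval x f ∂P) / Real.sqrt (∫ x, (MvPolynomial.eval x f) ^ 2 ∂Q)}

/-- Index set of unordered pairs `{i,j} ⊆ [n]`, encoded as pairs `(i,j)` with `i < j`. -/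
abbrev PairIdx (n : ℕ) := {p : Fin n × Fin n // p.1 < p.2}

/-- The Erdős–Rényi law `Q_{p₀,n}`: i.i.d. Bernoulli(p₀) entries. -/
noncomputable def erdosRenyi (p : ℝ) (n : ℕ) : Measure (PairIdx n → ℝ) :=
  Measure.pi fun _ => bernoulliReal p

/-- The planted dense subgraph measure `P_{p₀,p₁,ρ,n}`: draw `θ` with i.i.d. Bernoulli(ρ)
entries, then conditionally independent edges `Y_{ij} ∼ Bernoulli(p₀ + (p₁-p₀)θ_i θ_j)`. -/
noncomputable def plantedDense (p0 p1 ρ : ℝ) (n : ℕ) : Measure (PairIdx n → ℝ) :=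
  (Measure.pi fun _ : Fin n => bernoulliReal ρ).bind
    (fun θ => Measure.pi fun e => bernoulliReal (p0 + (p1 - p0) * θ e.1.1 * θ e.1.2))


/-! Conditionally on `θ ∈ {0,1}ⁿ` the edges are independent Bernoulli
`p₀ + (p₁ - p₀) θᵢ θⱼ`, so each centered and scaled edge has conditional mean `λ θᵢ θⱼ` and
the conditional expectation of the product is `λ^|E| ∏_{ij ∈ E} θᵢ θⱼ`. As `θ` is `0/1`-valued
and no vertex of `S` is isolated, `∏_{ij ∈ E} θᵢ θⱼ = ∏_{v ∈ V} θᵥ`, whose expectation is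
`ρ^|V|`. -/

section General

variable {α β E : Type*} [MeasurableSpace α] [MeasurableSpace β]

theorem Measurable.measure_pi {ι : Type*} [Fintype ι] {X : ι → Type*}
    [∀ i, MeasurableSpace (X i)] {μ : α → (i : ι) → Measure (X i)}
    [∀ a i, IsFiniteMeasure (μ a i)] (hμ : ∀ i, Measurable fun a ↦ μ a i) :
    Measurable fun a ↦ Measure.pi (μ a) := by
  have h_box : ∀ s : (i : ι) → Set (X i), (∀ i, MeasurableSet (s i)) →
      Measurable fun a ↦ Measure.pi (μ a) (Set.univ.pi s) := fun s hs ↦ by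
    simp_rw [Measure.pi_pi]
    exact Finset.measurable_prod _ fun i _ ↦ (Measure.measurable_coe (hs i)).comp (hμ i)
  refine .measure_of_isPiSystem generateFrom_pi.symm isPiSystem_pi ?_ ?_
  · rintro _ ⟨s, hs, rfl⟩
    exact h_box s fun i ↦ hs i (Set.mem_univ i)
  · simpa only [Set.pi_univ] using h_box (fun _ ↦ Set.univ) fun _ ↦ MeasurableSet.univ

theorem MeasureTheory.Measure.integral_bind [NormedAddCommGroup E] [NormedSpace ℝ E]
    {μ : Measure α} {κ : α → Measure β} (hκ : Measurable κ) {f : β → E}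
    (hf : Integrable f (μ.bind κ)) :
    ∫ y, f y ∂μ.bind κ = ∫ x, ∫ y, f y ∂κ x ∂μ :=
  Kernel.integral_comp (η := ⟨κ, hκ⟩) (κ := Kernel.const Unit μ) (a := ()) hf

theorem MeasureTheory.Integrable.of_ae_mem_finite [NormedAddCommGroup E] {μ : Measure α}
    [IsFiniteMeasure μ] {T : Set α} (hT : T.Finite) (hμT : ∀ᵐ x ∂μ, x ∈ T) {f : α → E}
    (hf : AEStronglyMeasurable f μ) : Integrable f μ := by
  obtain ⟨C, hC⟩ := (hT.image fun x ↦ ‖f x‖).bddAbove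
  exact .of_bound hf C (hμT.mono fun x hx ↦ hC ⟨x, hx, rfl⟩)

end General

section Bernoulli

theorem bernoulliReal_apply (p : ℝ) {s : Set ℝ} (hs : MeasurableSet s) :
    bernoulliReal p s =
      ENNReal.ofReal p * s.indicator 1 1 + ENNReal.ofReal (1 - p) * s.indicator 1 0 := by
  simp [bernoulliReal, Measure.dirac_apply' _ hs]

instance (p : ℝ) : IsFiniteMeasure (bernoulliReal p) :=
  ⟨by simp [bernoulliReal_apply p MeasurableSet.univ]⟩

theorem isProbabilityMeasure_bernoulliReal {p : ℝ} (hp : p ∈ Set.Icc (0 : ℝ) 1) :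
    IsProbabilityMeasure (bernoulliReal p) := by
  constructor
  rw [bernoulliReal_apply p MeasurableSet.univ]
  simp [← ENNReal.ofReal_add hp.1 (sub_nonneg.2 hp.2)]

theorem measurable_bernoulliReal : Measurable bernoulliReal :=
  Measure.measurable_of_measurable_coe _ fun s hs ↦ by
    simp_rw [bernoulliReal_apply _ hs]
    fun_prop

theorem ae_bernoulliReal (p : ℝ) : ∀ᵐ x ∂bernoulliReal p, x ∈ ({0, 1} : Set ℝ) := by
  simp only [bernoulliReal, ae_add_measure_iff]
  exact ⟨Measure.ae_smul_measure (by simp [ae_dirac_eq]) _,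
    Measure.ae_smul_measure (by simp [ae_dirac_eq]) _⟩

theorem ae_pi_bernoulliReal {ι : Type*} [Fintype ι] (q : ι → ℝ) :
    ∀ᵐ y ∂Measure.pi fun i ↦ bernoulliReal (q i), y ∈ Set.univ.pi fun _ ↦ ({0, 1} : Set ℝ) := by
  simp only [Set.mem_univ_pi, eventually_all]
  exact fun i ↦ Measure.tendsto_eval_ae_ae (ae_bernoulliReal (q i))

theorem integral_bernoulliReal {p : ℝ} (hp : p ∈ Set.Icc (0 : ℝ) 1) (g : ℝ → ℝ) :
    ∫ x, g x ∂bernoulliReal p = p * g 1 + (1 - p) * g 0 := by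
  have h_int : ∀ (c : ℝ≥0∞) (a : ℝ), c ≠ ∞ → Integrable g (c • Measure.dirac a) :=
    fun c a hc ↦ (integrable_dirac (by finiteness)).smul_measure hc
  rw [bernoulliReal, integral_add_measure (h_int _ _ ENNReal.ofReal_ne_top)
    (h_int _ _ ENNReal.ofReal_ne_top), integral_smul_measure, integral_smul_measure,
    integral_dirac, integral_dirac, ENNReal.toReal_ofReal hp.1,
    ENNReal.toReal_ofReal (sub_nonneg.2 hp.2), smul_eq_mul, smul_eq_mul]

theorem integral_prod_pi_bernoulliReal {ι : Type*} [Fintype ι] {q : ι → ℝ}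
    (hq : ∀ i, q i ∈ Set.Icc (0 : ℝ) 1) (s : Finset ι) (g : ι → ℝ → ℝ) :
    ∫ y, ∏ i ∈ s, g i (y i) ∂Measure.pi (fun i ↦ bernoulliReal (q i)) =
      ∏ i ∈ s, (q i * g i 1 + (1 - q i) * g i 0) := by
  classical
  have h_ext : ∀ y : ι → ℝ, ∏ i ∈ s, g i (y i) = ∏ i, (if i ∈ s then g i else 1) (y i) := by
    intro y
    rw [← Fintype.prod_extend_by_one]
    exact Finset.prod_congr rfl fun i _ ↦ by split_ifs <;> rfl
  simp_rw [h_ext, integral_fintype_prod_eq_prod, integral_bernoulliReal (hq _)]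
  rw [← Fintype.prod_extend_by_one s]
  exact Finset.prod_congr rfl fun i _ ↦ by split_ifs <;> simp

end Bernoulli

theorem prod_edges_eq_prod_vertices_of_zero_or_one {ι V M : Type*} [CommMonoidWithZero M]
    {ES : Finset ι} {VS : Finset V} (u w : ι → V) {θ : V → M}
    (hθ : ∀ v ∈ VS, θ v = 0 ∨ θ v = 1) (hinc : ∀ e ∈ ES, u e ∈ VS ∧ w e ∈ VS)
    (hnoiso : ∀ v ∈ VS, ∃ e ∈ ES, v = u e ∨ v = w e) :
    ∏ e ∈ ES, θ (u e) * θ (w e) = ∏ v ∈ VS, θ v := by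
  by_cases h_one : ∀ v ∈ VS, θ v = 1
  · rw [Finset.prod_eq_one h_one, Finset.prod_eq_one fun e he ↦ by
      rw [h_one _ (hinc e he).1, h_one _ (hinc e he).2, mul_one]]
  · push Not at h_one
    obtain ⟨v, hv, hv_ne⟩ := h_one
    have hv_zero : θ v = 0 := (hθ v hv).resolve_right hv_ne
    obtain ⟨e, he, rfl | rfl⟩ := hnoiso v hv
    · rw [Finset.prod_eq_zero hv hv_zero, Finset.prod_eq_zero he (by rw [hv_zero, zero_mul])]
    · rw [Finset.prod_eq_zero hv hv_zero, Finset.prod_eq_zero he (by rw [hv_zero, mul_zero])]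

section PlantedDense

variable {p0 p1 : ℝ} {n : ℕ}

def plantedEdgeProb (p0 p1 : ℝ) (θ : Fin n → ℝ) (e : PairIdx n) : ℝ :=
  p0 + (p1 - p0) * θ e.1.1 * θ e.1.2

noncomputable def plantedKernel (p0 p1 : ℝ) (n : ℕ) (θ : Fin n → ℝ) : Measure (PairIdx n → ℝ) :=
  Measure.pi fun e ↦ bernoulliReal (plantedEdgeProb p0 p1 θ e)

theorem plantedDense_eq_bind (ρ : ℝ) :
    plantedDense p0 p1 ρ n =
      (Measure.pi fun _ : Fin n ↦ bernoulliReal ρ).bind (plantedKernel p0 p1 n) :=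
  rfl

theorem measurable_plantedKernel : Measurable (plantedKernel p0 p1 n) :=
  Measurable.measure_pi fun _ ↦ measurable_bernoulliReal.comp (by unfold plantedEdgeProb; fun_prop)

theorem plantedEdgeProb_mem_Icc (hp0 : p0 ∈ Set.Icc (0 : ℝ) 1) (hp1 : p1 ∈ Set.Icc (0 : ℝ) 1)
    {θ : Fin n → ℝ} (hθ : θ ∈ Set.univ.pi fun _ ↦ ({0, 1} : Set ℝ)) (e : PairIdx n) :
    plantedEdgeProb p0 p1 θ e ∈ Set.Icc (0 : ℝ) 1 := by
  obtain h₁ | h₁ : θ e.1.1 = 0 ∨ θ e.1.1 = 1 := hθ e.1.1 trivial <;>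
  obtain h₂ | h₂ : θ e.1.2 = 0 ∨ θ e.1.2 = 1 := hθ e.1.2 trivial <;>
  simp [plantedEdgeProb, h₁, h₂, hp0, hp1]

theorem isProbabilityMeasure_plantedDense {ρ : ℝ} (hρ : ρ ∈ Set.Icc (0 : ℝ) 1)
    (hp0 : p0 ∈ Set.Icc (0 : ℝ) 1) (hp1 : p1 ∈ Set.Icc (0 : ℝ) 1) :
    IsProbabilityMeasure (plantedDense p0 p1 ρ n) := by
  have := isProbabilityMeasure_bernoulliReal hρ
  rw [plantedDense_eq_bind]
  refine isProbabilityMeasure_bind measurable_plantedKernel.aemeasurable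
    ((ae_pi_bernoulliReal _).mono fun θ hθ ↦ ?_)
  have := fun e ↦ isProbabilityMeasure_bernoulliReal (plantedEdgeProb_mem_Icc hp0 hp1 hθ e)
  unfold plantedKernel
  infer_instance

theorem ae_plantedDense (ρ : ℝ) :
    ∀ᵐ y ∂plantedDense p0 p1 ρ n, y ∈ Set.univ.pi fun _ ↦ ({0, 1} : Set ℝ) :=
  Measure.ae_comp_of_ae_ae (κ := ⟨plantedKernel p0 p1 n, measurable_plantedKernel⟩)
    (.univ_pi fun _ ↦ (Set.toFinite _).measurableSet)
    (Eventually.of_forall fun _ ↦ ae_pi_bernoulliReal _)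

theorem integral_prod_plantedKernel (hp0 : p0 ∈ Set.Icc (0 : ℝ) 1)
    (hp1 : p1 ∈ Set.Icc (0 : ℝ) 1) {θ : Fin n → ℝ}
    (hθ : θ ∈ Set.univ.pi fun _ ↦ ({0, 1} : Set ℝ)) (ES : Finset (PairIdx n)) (c : ℝ) :
    ∫ y, ∏ e ∈ ES, ((y e - p0) / c) ∂plantedKernel p0 p1 n θ =
      ∏ e ∈ ES, ((p1 - p0) / c * (θ e.1.1 * θ e.1.2)) := by
  rw [plantedKernel, integral_prod_pi_bernoulliReal (plantedEdgeProb_mem_Icc hp0 hp1 hθ)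
    ES fun _ x ↦ (x - p0) / c]
  exact Finset.prod_congr rfl fun _ _ ↦ by rw [plantedEdgeProb]; ring

end PlantedDense

theorem statement10_general (n : ℕ) (ρ p0 p1 : ℝ)
    (hρ : ρ ∈ Set.Icc (0:ℝ) 1) (hp0 : 0 < p0) (hp0lt : p0 < 1) (hp1 : p1 ∈ Set.Icc (0:ℝ) 1)
    (VS : Finset (Fin n)) (ES : Finset (PairIdx n))
    (hinc : ∀ e ∈ ES, e.1.1 ∈ VS ∧ e.1.2 ∈ VS)
    (hnoiso : ∀ v ∈ VS, ∃ e ∈ ES, v = e.1.1 ∨ v = e.1.2) :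
    ∫ y, ∏ e ∈ ES, ((y e - p0) / Real.sqrt (p0 * (1 - p0))) ∂(plantedDense p0 p1 ρ n)
      = ((p1 - p0) / Real.sqrt (p0 * (1 - p0))) ^ ES.card * ρ ^ VS.card := by
  set c := Real.sqrt (p0 * (1 - p0))
  have hp0' : p0 ∈ Set.Icc (0 : ℝ) 1 := ⟨hp0.le, hp0lt.le⟩
  have := isProbabilityMeasure_plantedDense (n := n) hρ hp0' hp1
  have h_int : Integrable (fun y : PairIdx n → ℝ ↦ ∏ e ∈ ES, ((y e - p0) / c))
      (plantedDense p0 p1 ρ n) :=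
    .of_ae_mem_finite (Set.Finite.pi fun _ ↦ Set.toFinite _) (ae_plantedDense ρ)
      (Finset.measurable_prod _ fun _ _ ↦ by fun_prop).aestronglyMeasurable
  calc ∫ y, ∏ e ∈ ES, ((y e - p0) / c) ∂plantedDense p0 p1 ρ n
      = ∫ θ, ∫ y, ∏ e ∈ ES, ((y e - p0) / c) ∂plantedKernel p0 p1 n θ
          ∂Measure.pi fun _ ↦ bernoulliReal ρ :=
        Measure.integral_bind measurable_plantedKernel h_int
    _ = ∫ θ, ((p1 - p0) / c) ^ ES.card * ∏ v ∈ VS, θ v ∂Measure.pi fun _ ↦ bernoulliReal ρ := by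
        refine integral_congr_ae ((ae_pi_bernoulliReal _).mono fun θ hθ ↦ ?_)
        dsimp only
        rw [integral_prod_plantedKernel hp0' hp1 hθ, Finset.prod_mul_distrib, Finset.prod_const,
          prod_edges_eq_prod_vertices_of_zero_or_one _ _ (fun v _ ↦ hθ v trivial) hinc hnoiso]
    _ = ((p1 - p0) / c) ^ ES.card * ρ ^ VS.card := by
        rw [integral_const_mul, integral_prod_pi_bernoulliReal (fun _ ↦ hρ) VS fun _ x ↦ x]
        simp

/-- expectation of the centered edge product under the planted dense
subgraph measure: it equals `λ^{|E(S)|} ρ^{|V(S)|}` where `λ = (p₁-p₀)/√(p₀(1-p₀))`,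
for any simple graph `S` (with vertex set `VS ⊆ [n]` and edge set `ES`) having
no isolated vertices. -/
theorem statement10 (n : ℕ) (hn : 1 ≤ n) (ρ p0 p1 : ℝ)
    (hρ : ρ ∈ Set.Icc (0:ℝ) 1) (hp0 : 0 < p0) (hp0lt : p0 < 1) (hp1 : p1 ∈ Set.Icc (0:ℝ) 1)
    (VS : Finset (Fin n)) (ES : Finset (PairIdx n))
    (hinc : ∀ e ∈ ES, e.1.1 ∈ VS ∧ e.1.2 ∈ VS)
    (hnoiso : ∀ v ∈ VS, ∃ e ∈ ES, v = e.1.1 ∨ v = e.1.2) :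
    ∫ y, ∏ e ∈ ES, ((y e - p0) / Real.sqrt (p0 * (1 - p0))) ∂(plantedDense p0 p1 ρ n)
      = ((p1 - p0) / Real.sqrt (p0 * (1 - p0))) ^ ES.card * ρ ^ VS.card :=
  statement10_general n ρ p0 p1 hρ hp0 hp0lt hp1 VS ES hinc hnoiso
end

section
/- For every δ ∈ (0,1) there exist constants C ≥ 1 and δ′ ∈ (0, δ] such that the following holds. Let L ≥ 1 be an integer, ρ ∈ [0,1], and Δ₁, …, Δ_L ∈ (0,1) satisfy Δ_ℓ ≥ δ³/(2L²) for every ℓ, max_ℓ Δ_ℓ ≤ 1−δ, and Σ_{ℓ=1}^{L} ρ⁴·Δ_ℓ/(1 − (1−ρ⁴)·Δ_ℓ) ≤ 1−δ. Then for every integer ℵ ≥ 1: Σ_{ω ∈ [L]^ℵ} ρ^{4·#{1≤i≤ℵ−1 : ω_i ≠ ω_{i+1}}} · ∏_{ℓ=1}^{L} Δ_ℓ^{#{1≤i≤ℵ : ω_i = ℓ}} ≤ C·L²·(1−δ′)^{ℵ}. -/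
/-- Number of positions `1 ≤ i ≤ ℵ-1` at which two consecutive letters of the word `ω` differ.
(Here `i + 1` is addition in `Fin N`, which agrees with the successor whenever
`(i : ℕ) + 1 < N`.) -/
def diffCount {N L : ℕ} (ω : Fin N → Fin L) : ℕ :=
  (Finset.univ.filter (fun i : Fin N =>
    (i : ℕ) + 1 < N ∧ ω i ≠ ω ⟨((i : ℕ) + 1) % N, Nat.mod_lt _ i.pos⟩)).card

/-- Number of occurrences of the letter `ℓ` in the word `ω`. -/
def occCount {N L : ℕ} (ω : Fin N → Fin L) (ℓ : Fin L) : ℕ :=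
  (Finset.univ.filter (fun i : Fin N => ω i = ℓ)).card

lemma snoc_mk {α : Type*} {n : ℕ} (ω : Fin n → α) (m : α) (i : ℕ) (h : i < n + 1) :
    (Fin.snoc ω m : Fin (n+1) → α) ⟨i, h⟩ = if h' : i < n then ω ⟨i, h'⟩ else m := by
  split_ifs with h'
  · exact Fin.snoc_castSucc (α := fun _ => α) (p := ω) (x := m) (i := ⟨i, h'⟩)
  · have hh : (⟨i, h⟩ : Fin (n+1)) = Fin.last n := by
      ext; simp only [Fin.val_last]; omega
    rw [hh]; exact Fin.snoc_last (α := fun _ => α) (p := ω) (x := m)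

lemma occ_snoc {n L : ℕ} (ω : Fin n → Fin L) (m ℓ : Fin L) :
    occCount (Fin.snoc ω m) ℓ = occCount ω ℓ + if m = ℓ then 1 else 0 := by
  unfold occCount
  rw [Finset.card_filter, Finset.card_filter, Fin.sum_univ_castSucc]
  simp [eq_comm]

lemma term_eq {n L : ℕ} (ω : Fin (n+1) → Fin L) (m : Fin L) (i : Fin (n+1)) :
    (if ((Fin.castSucc i : Fin (n+2)) : ℕ) + 1 < n + 2 ∧
        (Fin.snoc ω m : Fin (n+2) → Fin L) (Fin.castSucc i) ≠
          (Fin.snoc ω m : Fin (n+2) → Fin L) ⟨(((Fin.castSucc i : Fin (n+2)) : ℕ) + 1) % (n + 2),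
            Nat.mod_lt _ (Fin.castSucc i).pos⟩ then 1 else 0)
      = (if ((i : ℕ) + 1 < n + 1 ∧ ω i ≠ ω ⟨((i : ℕ) + 1) % (n + 1), Nat.mod_lt _ i.pos⟩)
          then 1 else 0)
        + (if ((i : ℕ) = n ∧ ω (Fin.last n) ≠ m) then 1 else 0) := by
  have hi : (i : ℕ) < n + 1 := i.is_lt
  rcases lt_or_eq_of_le (Nat.lt_succ_iff.mp hi) with h | h
  · -- (i : ℕ) < n
    have h2 : ((i : ℕ) + 1) % (n + 2) = (i : ℕ) + 1 := Nat.mod_eq_of_lt (by omega)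
    have h3 : ((i : ℕ) + 1) % (n + 1) = (i : ℕ) + 1 := Nat.mod_eq_of_lt (by omega)
    simp only [Fin.coe_castSucc, h2, h3, Fin.snoc_castSucc, snoc_mk]
    rw [dif_pos (by omega : (i:ℕ) + 1 < n + 1)]
    have c1 : ((i : ℕ) + 1 < n + 2) = True := eq_true (by omega)
    have c2 : ((i : ℕ) + 1 < n + 1) = True := eq_true (by omega)
    have c3 : ((i : ℕ) = n) = False := eq_false (by omega)
    simp only [c1, c2, c3, true_and, false_and, if_false, add_zero]
  · -- (i : ℕ) = n, i.e. i = last n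
    have hl : i = Fin.last n := by ext; simpa using h
    subst hl
    have h2 : (n + 1) % (n + 2) = n + 1 := Nat.mod_eq_of_lt (by omega)
    simp only [Fin.coe_castSucc, Fin.val_last, h2, Fin.snoc_castSucc, snoc_mk]
    rw [dif_neg (by omega : ¬ (n + 1 < n + 1))]
    have c1 : (n + 1 < n + 2) = True := eq_true (by omega)
    have c2 : (n + 1 < n + 1) = False := eq_false (by omega)
    simp only [c1, c2, true_and, false_and, if_false, zero_add, if_true]

lemma diff_snoc {n L : ℕ} (ω : Fin (n+1) → Fin L) (m : Fin L) :
    diffCount (Fin.snoc ω m : Fin (n+2) → Fin L)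
      = diffCount ω + if ω (Fin.last n) = m then 0 else 1 := by
  unfold diffCount
  rw [Finset.card_filter, Finset.card_filter, Fin.sum_univ_castSucc (n := n+1)]
  have hlast : (if ((Fin.last (n+1) : ℕ) + 1 < n + 2 ∧
      (Fin.snoc ω m : Fin (n+2) → Fin L) (Fin.last (n+1)) ≠
        (Fin.snoc ω m : Fin (n+2) → Fin L) ⟨(((Fin.last (n+1) : Fin (n+2)) : ℕ) + 1) % (n + 2),
          Nat.mod_lt _ (Fin.last (n+1)).pos⟩) then 1 else 0) = 0 := by
    simp
  rw [hlast, add_zero]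
  rw [Finset.sum_congr rfl (fun i _ => term_eq ω m i), Finset.sum_add_distrib]
  congr 1
  have hterm : ∀ i : Fin (n+1), (if ((i : ℕ) = n ∧ ω (Fin.last n) ≠ m) then (1:ℕ) else 0)
      = if i = Fin.last n then (if ω (Fin.last n) = m then 0 else 1) else 0 := by
    intro i
    by_cases h : i = Fin.last n
    · subst h; by_cases hm : ω (Fin.last n) = m <;> simp [hm]
    · have : ¬ ((i:ℕ) = n) := by
        intro hc; exact h (by ext; simpa using hc)
      simp [h, this]
  rw [Finset.sum_congr rfl (fun i _ => hterm i), Finset.sum_ite_eq' Finset.univ (Fin.last n)]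
  simp

open Finset

lemma weight_snoc {n L : ℕ} (ρ : ℝ) (Δ : Fin L → ℝ) (ω : Fin (n+1) → Fin L) (m : Fin L) :
    ρ ^ (4 * diffCount (Fin.snoc ω m : Fin (n+2) → Fin L)) *
        ∏ ℓ, Δ ℓ ^ occCount (Fin.snoc ω m : Fin (n+2) → Fin L) ℓ
      = (ρ ^ (4 * diffCount ω) * ∏ ℓ, Δ ℓ ^ occCount ω ℓ) *
        (Δ m * if ω (Fin.last n) = m then 1 else ρ ^ 4) := by
  rw [diff_snoc]
  have hprod : ∏ ℓ, Δ ℓ ^ occCount (Fin.snoc ω m : Fin (n+2) → Fin L) ℓ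
      = (∏ ℓ, Δ ℓ ^ occCount ω ℓ) * Δ m := by
    rw [Finset.prod_congr rfl (fun ℓ _ => by rw [occ_snoc ω m ℓ, pow_add]),
        Finset.prod_mul_distrib]
    congr 1
    have h : ∀ ℓ : Fin L, Δ ℓ ^ (if m = ℓ then 1 else 0) = if m = ℓ then Δ ℓ else 1 := by
      intro ℓ; split <;> simp
    rw [Finset.prod_congr rfl (fun ℓ _ => h ℓ), Finset.prod_ite_eq]
    simp
  rw [hprod, Nat.mul_add, pow_add]
  by_cases h : ω (Fin.last n) = m <;> simp [h] <;> ring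

lemma sum_pi_succ {n L : ℕ} (f : (Fin (n+1) → Fin L) → ℝ) :
    ∑ ω' : Fin (n+1) → Fin L, f ω'
      = ∑ m : Fin L, ∑ ω : Fin n → Fin L, f (Fin.snoc ω m) := by
  rw [← Equiv.sum_comp (Fin.snocEquiv (fun _ => Fin L)) f, Fintype.sum_prod_type]
  rfl

/-- Partial sums of the word weights, with the last letter fixed. -/
def Vsum {L : ℕ} (ρ : ℝ) (Δ : Fin L → ℝ) (n : ℕ) (m : Fin L) : ℝ :=
  ∑ ω : Fin (n+1) → Fin L,
    if ω (Fin.last n) = m then ρ ^ (4 * diffCount ω) * ∏ ℓ, Δ ℓ ^ occCount ω ℓ else 0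

lemma diffCount_one {L : ℕ} (ω : Fin 1 → Fin L) : diffCount ω = 0 := by
  unfold diffCount
  rw [Finset.card_eq_zero, Finset.filter_eq_empty_iff]
  intro i _
  rintro ⟨h, -⟩
  omega

lemma Vsum_zero {L : ℕ} (ρ : ℝ) (Δ : Fin L → ℝ) (m : Fin L) :
    Vsum ρ Δ 0 m = Δ m := by
  unfold Vsum
  rw [← Equiv.sum_comp (Equiv.funUnique (Fin 1) (Fin L)).symm]
  have h : ∀ x : Fin L,
      (if ((Equiv.funUnique (Fin 1) (Fin L)).symm x) (Fin.last 0) = m then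
        ρ ^ (4 * diffCount ((Equiv.funUnique (Fin 1) (Fin L)).symm x)) *
          ∏ ℓ, Δ ℓ ^ occCount ((Equiv.funUnique (Fin 1) (Fin L)).symm x) ℓ else 0)
      = if x = m then Δ x else 0 := by
    intro x
    have hocc : ∀ ℓ, occCount (fun _ : Fin 1 => x) ℓ = if x = ℓ then 1 else 0 := by
      intro ℓ
      unfold occCount
      simp [Finset.filter_const, apply_ite]
    have hprod : (∏ ℓ, Δ ℓ ^ occCount (fun _ : Fin 1 => x) ℓ) = Δ x := by
      rw [Finset.prod_congr rfl (fun ℓ _ => by rw [hocc ℓ])]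
      have h2 : ∀ ℓ : Fin L, Δ ℓ ^ (if x = ℓ then 1 else 0) = if x = ℓ then Δ ℓ else 1 := by
        intro ℓ; split <;> simp
      rw [Finset.prod_congr rfl (fun ℓ _ => h2 ℓ), Finset.prod_ite_eq]
      simp
    show (if x = m then ρ ^ (4 * diffCount (fun _ : Fin 1 => x)) *
        ∏ ℓ, Δ ℓ ^ occCount (fun _ : Fin 1 => x) ℓ else 0) = if x = m then Δ x else 0
    rw [diffCount_one, hprod]
    simp
  rw [Finset.sum_congr rfl (fun x _ => h x), Finset.sum_ite_eq' Finset.univ m Δ]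
  simp

lemma Vsum_succ {n L : ℕ} (ρ : ℝ) (Δ : Fin L → ℝ) (m : Fin L) :
    Vsum ρ Δ (n+1) m
      = Δ m * ∑ m', (if m' = m then 1 else ρ ^ 4) * Vsum ρ Δ n m' := by
  unfold Vsum
  rw [sum_pi_succ]
  have h1 : ∀ m'' : Fin L,
      (∑ ω : Fin (n+1) → Fin L,
        if (Fin.snoc ω m'' : Fin (n+2) → Fin L) (Fin.last (n+1)) = m then
          ρ ^ (4 * diffCount (Fin.snoc ω m'' : Fin (n+2) → Fin L)) *
            ∏ ℓ, Δ ℓ ^ occCount (Fin.snoc ω m'' : Fin (n+2) → Fin L) ℓ else 0)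
      = if m'' = m then
          (∑ ω : Fin (n+1) → Fin L,
            (ρ ^ (4 * diffCount ω) * ∏ ℓ, Δ ℓ ^ occCount ω ℓ) *
              (Δ m'' * if ω (Fin.last n) = m'' then 1 else ρ ^ 4)) else 0 := by
    intro m''
    by_cases h : m'' = m
    · simp only [h, if_true]
      refine Finset.sum_congr rfl fun ω _ => ?_
      rw [Fin.snoc_last, if_pos rfl, weight_snoc]
    · simp only [Fin.snoc_last, h, if_false]
      simp
  rw [Finset.sum_congr rfl (fun m'' _ => h1 m''), Finset.sum_ite_eq' Finset.univ m]
  simp only [Finset.mem_univ, if_true]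
  have h2 : ∀ ω : Fin (n+1) → Fin L,
      (ρ ^ (4 * diffCount ω) * ∏ ℓ, Δ ℓ ^ occCount ω ℓ) *
          (Δ m * if ω (Fin.last n) = m then 1 else ρ ^ 4)
      = ∑ m' : Fin L,
          (if ω (Fin.last n) = m' then
            ρ ^ (4 * diffCount ω) * ∏ ℓ, Δ ℓ ^ occCount ω ℓ else 0) *
            (Δ m * if m' = m then 1 else ρ ^ 4) := by
    intro ω
    rw [Finset.sum_eq_single (ω (Fin.last n))]
    · rw [if_pos rfl]
    · intro b _ hb
      rw [if_neg (fun hc => hb hc.symm), zero_mul]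
    · intro hc; exact absurd (Finset.mem_univ _) hc
  rw [Finset.sum_congr rfl (fun ω _ => h2 ω), Finset.sum_comm, Finset.mul_sum]
  refine Finset.sum_congr rfl fun m' _ => ?_
  rw [← Finset.sum_mul]
  ring

lemma Vsum_total {n L : ℕ} (ρ : ℝ) (Δ : Fin L → ℝ) :
    ∑ m, Vsum ρ Δ n m
      = ∑ ω : Fin (n+1) → Fin L, ρ ^ (4 * diffCount ω) * ∏ ℓ, Δ ℓ ^ occCount ω ℓ := by
  unfold Vsum
  rw [Finset.sum_comm]
  refine Finset.sum_congr rfl fun ω _ => ?_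
  rw [Finset.sum_ite_eq Finset.univ (ω (Fin.last n))]
  simp

lemma Vsum_nonneg {n L : ℕ} {ρ : ℝ} {Δ : Fin L → ℝ} (hρ : 0 ≤ ρ) (hΔ : ∀ ℓ, 0 ≤ Δ ℓ)
    (m : Fin L) : 0 ≤ Vsum ρ Δ n m := by
  unfold Vsum
  refine Finset.sum_nonneg fun ω _ => ?_
  split
  · exact mul_nonneg (pow_nonneg hρ _) (Finset.prod_nonneg fun ℓ _ => pow_nonneg (hΔ ℓ) _)
  · exact le_rfl

set_option maxHeartbeats 1000000 in
/-- geometric decay of the weighted word sum under the generalized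
Kesten–Stigum condition. -/
theorem statement18 (δ : ℝ) (hδ : δ ∈ Set.Ioo (0:ℝ) 1) :
    ∃ C : ℝ, 1 ≤ C ∧ ∃ δ' : ℝ, δ' ∈ Set.Ioc (0:ℝ) δ ∧
      ∀ L : ℕ, 1 ≤ L → ∀ ρ : ℝ, ρ ∈ Set.Icc (0:ℝ) 1 → ∀ Δ : Fin L → ℝ,
        (∀ ℓ, Δ ℓ ∈ Set.Ioo (0:ℝ) 1) →
        (∀ ℓ, δ ^ 3 / (2 * (L : ℝ) ^ 2) ≤ Δ ℓ) →
        (∀ ℓ, Δ ℓ ≤ 1 - δ) →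
        (∑ ℓ, ρ ^ 4 * Δ ℓ / (1 - (1 - ρ ^ 4) * Δ ℓ)) ≤ 1 - δ →
        ∀ N : ℕ, 1 ≤ N →
          (∑ ω : Fin N → Fin L,
              ρ ^ (4 * diffCount ω) * ∏ ℓ, (Δ ℓ) ^ (occCount ω ℓ))
            ≤ C * (L : ℝ) ^ 2 * (1 - δ') ^ N := by
  obtain ⟨hδ0, hδ1⟩ := hδ
  refine ⟨4 / δ, ?_, δ ^ 2 / 2, ⟨by positivity, by nlinarith⟩, ?_⟩
  · rw [le_div_iff₀ hδ0]; nlinarith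
  intro L hL ρ hρ Δ hΔ01 hΔlow hΔup hKS N hN
  obtain ⟨n, rfl⟩ : ∃ n, N = n + 1 := ⟨N - 1, by omega⟩
  obtain ⟨hρ0, hρ1⟩ := hρ
  set δ' : ℝ := δ ^ 2 / 2 with hδ'def
  have hδ'0 : 0 < δ' := by positivity
  have hδ'half : δ' ≤ 1 / 2 := by nlinarith
  have hr0 : 0 ≤ ρ ^ 4 := by positivity
  have hr1 : ρ ^ 4 ≤ 1 := pow_le_one₀ hρ0 hρ1
  -- the comparison vector
  set d : Fin L → ℝ := fun ℓ => 1 - δ' - (1 - ρ ^ 4) * Δ ℓ with hddef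
  set c : Fin L → ℝ := fun ℓ => Δ ℓ / d ℓ with hcdef
  have hd_lb : ∀ ℓ, δ / 2 ≤ d ℓ := by
    intro ℓ
    have h1 := hΔup ℓ
    have h2 := (hΔ01 ℓ).1
    have : (1 - ρ ^ 4) * Δ ℓ ≤ Δ ℓ := by nlinarith
    simp only [hddef]
    nlinarith
  have hd_pos : ∀ ℓ, 0 < d ℓ := fun ℓ => lt_of_lt_of_le (by positivity) (hd_lb ℓ)
  have hd_ub : ∀ ℓ, d ℓ ≤ 1 := by
    intro ℓ
    have h2 := (hΔ01 ℓ).1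
    have : 0 ≤ (1 - ρ ^ 4) * Δ ℓ := mul_nonneg (by nlinarith) h2.le
    simp only [hddef]
    nlinarith
  have hc_nonneg : ∀ ℓ, 0 ≤ c ℓ := fun ℓ => div_nonneg (hΔ01 ℓ).1.le (hd_pos ℓ).le
  have hΔ_le_c : ∀ ℓ, Δ ℓ ≤ c ℓ := by
    intro ℓ
    rw [hcdef, le_div_iff₀ (hd_pos ℓ)]
    nlinarith [(hΔ01 ℓ).1, hd_ub ℓ, hd_pos ℓ]
  have hcd : ∀ ℓ, c ℓ * d ℓ = Δ ℓ := fun ℓ => div_mul_cancel₀ _ (hd_pos ℓ).ne'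
  -- the key analytic bound : ρ^4 * ∑ c ≤ 1
  have hkey : ρ ^ 4 * ∑ ℓ, c ℓ ≤ 1 := by
    have hterm : ∀ ℓ, ρ ^ 4 * c ℓ ≤ (1 + δ) * (ρ ^ 4 * Δ ℓ / (1 - (1 - ρ ^ 4) * Δ ℓ)) := by
      intro ℓ
      have hb_pos : 0 < 1 - (1 - ρ ^ 4) * Δ ℓ := by
        have := hd_pos ℓ
        simp only [hddef] at this
        nlinarith
      have hbδ : δ ≤ 1 - (1 - ρ ^ 4) * Δ ℓ := by
        have h1 := hΔup ℓ
        have h2 := (hΔ01 ℓ).1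
        nlinarith
      have hrΔ : 0 ≤ ρ ^ 4 * Δ ℓ := mul_nonneg hr0 (hΔ01 ℓ).1.le
      have e1 : ρ ^ 4 * c ℓ = (ρ ^ 4 * Δ ℓ) / d ℓ := by
        show ρ ^ 4 * (Δ ℓ / d ℓ) = _; ring
      have e2 : (1 + δ) * (ρ ^ 4 * Δ ℓ / (1 - (1 - ρ ^ 4) * Δ ℓ))
          = ((1 + δ) * (ρ ^ 4 * Δ ℓ)) / (1 - (1 - ρ ^ 4) * Δ ℓ) := by ring
      rw [e1, e2, div_le_div_iff₀ (hd_pos ℓ) hb_pos]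
      have hdb : d ℓ = (1 - (1 - ρ ^ 4) * Δ ℓ) - δ ^ 2 / 2 := by
        show 1 - δ' - (1 - ρ ^ 4) * Δ ℓ = _
        rw [hδ'def]; ring
      rw [hdb]
      nlinarith [mul_le_mul_of_nonneg_left hbδ (mul_nonneg hδ0.le hrΔ), hrΔ, hδ0, hδ1,
        mul_nonneg hrΔ hδ0.le, mul_nonneg (mul_nonneg hrΔ hδ0.le) hδ0.le]
    calc ρ ^ 4 * ∑ ℓ, c ℓ = ∑ ℓ, ρ ^ 4 * c ℓ := by rw [Finset.mul_sum]
      _ ≤ ∑ ℓ, (1 + δ) * (ρ ^ 4 * Δ ℓ / (1 - (1 - ρ ^ 4) * Δ ℓ)) :=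
          Finset.sum_le_sum fun ℓ _ => hterm ℓ
      _ = (1 + δ) * ∑ ℓ, ρ ^ 4 * Δ ℓ / (1 - (1 - ρ ^ 4) * Δ ℓ) := by rw [Finset.mul_sum]
      _ ≤ (1 + δ) * (1 - δ) := by
          apply mul_le_mul_of_nonneg_left hKS (by linarith)
      _ ≤ 1 := by nlinarith
  -- induction
  have hVd : ∀ k m, Vsum ρ Δ k m ≤ (1 - δ') ^ k * c m := by
    intro k
    induction k with
    | zero => intro m; rw [Vsum_zero]; simpa using hΔ_le_c m
    | succ k ih =>
      intro m
      rw [Vsum_succ]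
      have hpow : (0:ℝ) ≤ (1 - δ') ^ k := by
        apply pow_nonneg; linarith
      have hsplit : ∀ m' : Fin L, (if m' = m then (1:ℝ) else ρ ^ 4) * Vsum ρ Δ k m'
          = ρ ^ 4 * Vsum ρ Δ k m' + (if m' = m then (1 - ρ ^ 4) * Vsum ρ Δ k m' else 0) := by
        intro m'; split <;> ring
      have h1 : (∑ m', (if m' = m then (1:ℝ) else ρ ^ 4) * Vsum ρ Δ k m')
          = ρ ^ 4 * ∑ m', Vsum ρ Δ k m' + (1 - ρ ^ 4) * Vsum ρ Δ k m := by
        rw [Finset.sum_congr rfl (fun m' _ => hsplit m'), Finset.sum_add_distrib,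
            ← Finset.mul_sum, Finset.sum_ite_eq' Finset.univ m]
        simp
      rw [h1]
      have hsum_le : ∑ m', Vsum ρ Δ k m' ≤ (1 - δ') ^ k * ∑ m', c m' := by
        rw [Finset.mul_sum]
        exact Finset.sum_le_sum fun m' _ => ih m'
      have hVm := ih m
      have hVnn : 0 ≤ Vsum ρ Δ k m := Vsum_nonneg hρ0 (fun ℓ => (hΔ01 ℓ).1.le) m
      have hΔm0 := (hΔ01 m).1.le
      have hstep : ρ ^ 4 * ∑ m', Vsum ρ Δ k m' + (1 - ρ ^ 4) * Vsum ρ Δ k m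
          ≤ (1 - δ') ^ k * (ρ ^ 4 * ∑ m', c m' + (1 - ρ ^ 4) * c m) := by
        have t1 : ρ ^ 4 * ∑ m', Vsum ρ Δ k m' ≤ ρ ^ 4 * ((1 - δ') ^ k * ∑ m', c m') :=
          mul_le_mul_of_nonneg_left hsum_le hr0
        have t2 : (1 - ρ ^ 4) * Vsum ρ Δ k m ≤ (1 - ρ ^ 4) * ((1 - δ') ^ k * c m) :=
          mul_le_mul_of_nonneg_left hVm (by linarith)
        nlinarith [t1, t2]
      have hcore : Δ m * (ρ ^ 4 * ∑ m', c m' + (1 - ρ ^ 4) * c m) ≤ (1 - δ') * c m := by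
        have hdm : d m = 1 - δ' - (1 - ρ ^ 4) * Δ m := rfl
        have hcdm := hcd m
        rw [hdm] at hcdm
        have h2 : Δ m * (ρ ^ 4 * ∑ m', c m') ≤ Δ m * 1 := mul_le_mul_of_nonneg_left hkey hΔm0
        nlinarith [h2, hcdm, hc_nonneg m]
      calc Δ m * (ρ ^ 4 * ∑ m', Vsum ρ Δ k m' + (1 - ρ ^ 4) * Vsum ρ Δ k m)
          ≤ Δ m * ((1 - δ') ^ k * (ρ ^ 4 * ∑ m', c m' + (1 - ρ ^ 4) * c m)) :=
            mul_le_mul_of_nonneg_left hstep hΔm0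
        _ = (1 - δ') ^ k * (Δ m * (ρ ^ 4 * ∑ m', c m' + (1 - ρ ^ 4) * c m)) := by ring
        _ ≤ (1 - δ') ^ k * ((1 - δ') * c m) := mul_le_mul_of_nonneg_left hcore hpow
        _ = (1 - δ') ^ (k+1) * c m := by rw [pow_succ]; ring
  -- assemble
  have hc_ub : ∀ ℓ, c ℓ ≤ 2 / δ := by
    intro ℓ
    calc c ℓ = Δ ℓ / d ℓ := rfl
      _ ≤ 1 / (δ / 2) :=
          div_le_div₀ zero_le_one (hΔ01 ℓ).2.le (by linarith) (hd_lb ℓ)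
      _ = 2 / δ := by rw [div_div_eq_mul_div, one_mul]
  have hpn : (0:ℝ) ≤ (1 - δ') ^ n := by apply pow_nonneg; linarith
  have hL1 : (1:ℝ) ≤ (L:ℝ) := by exact_mod_cast hL
  calc (∑ ω : Fin (n+1) → Fin L, ρ ^ (4 * diffCount ω) * ∏ ℓ, (Δ ℓ) ^ (occCount ω ℓ))
      = ∑ m, Vsum ρ Δ n m := (Vsum_total ρ Δ).symm
    _ ≤ ∑ m, (1 - δ') ^ n * c m := Finset.sum_le_sum fun m _ => hVd n m
    _ = (1 - δ') ^ n * ∑ m, c m := by rw [Finset.mul_sum]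
    _ ≤ (1 - δ') ^ n * ((L:ℝ) * (2 / δ)) := by
        apply mul_le_mul_of_nonneg_left _ hpn
        calc (∑ m, c m) ≤ ∑ _m : Fin L, 2 / δ := Finset.sum_le_sum fun m _ => hc_ub m
          _ = (L:ℝ) * (2 / δ) := by
              rw [Finset.sum_const, Finset.card_univ, Fintype.card_fin, nsmul_eq_mul]
    _ ≤ 4 / δ * (L:ℝ) ^ 2 * (1 - δ') ^ (n+1) := by
        rw [pow_succ]
        have ht : (0:ℝ) < 2 / δ := by positivity
        have hLL : (L:ℝ) ≤ (L:ℝ) ^ 2 := by nlinarith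
        have h1δ' : (1:ℝ)/2 ≤ 1 - δ' := by linarith
        have hsq : (L:ℝ) ^ 2 * (1/2) ≤ (L:ℝ) ^ 2 * (1 - δ') :=
          mul_le_mul_of_nonneg_left h1δ' (by positivity)
        have hmid : (L:ℝ) ≤ 2 * ((L:ℝ) ^ 2 * (1 - δ')) := by linarith
        have hinner : (L:ℝ) * (2 / δ) ≤ 4 / δ * (L:ℝ) ^ 2 * (1 - δ') := by
          calc (L:ℝ) * (2 / δ) = (2 / δ) * (L:ℝ) := by ring
            _ ≤ (2 / δ) * (2 * ((L:ℝ) ^ 2 * (1 - δ'))) :=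
                mul_le_mul_of_nonneg_left hmid ht.le
            _ = 4 / δ * (L:ℝ) ^ 2 * (1 - δ') := by ring
        calc (1 - δ') ^ n * ((L:ℝ) * (2 / δ))
            ≤ (1 - δ') ^ n * (4 / δ * (L:ℝ) ^ 2 * (1 - δ')) :=
              mul_le_mul_of_nonneg_left hinner hpn
          _ = 4 / δ * (L:ℝ) ^ 2 * ((1 - δ') ^ n * (1 - δ')) := by ring
end
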